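/- arXiv:2408.13901 — 4 statements merged into one kernel-verified Lean document; each statement's English description precedes it below -/
import Mathlib

section
/- For fixed constants f_r > 0 and df > 1, the function t(x, y) = (f_r·√(1−y) + √(x·y)) / √((1−x)/(df−1)) defined for x, y ∈ [0,1), is strictly increasing in x. -/
/-- The adjusted t-statistic `t(x,y) = (f_r·√(1−y) + √(x·y)) / √((1−x)/(df−1))`
is strictly increasing in `x` on `[0,1)`, for fixed `y ∈ [0,1)`, `f_r > 0`, `df > 1`. -/
theorem stmt0 (f_r df : ℝ) (hf : 0 < f_r) (hdf : 1 < df) (y : ℝ)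
    (hy : y ∈ Set.Ico (0:ℝ) 1) :
    StrictMonoOn
      (fun x : ℝ => (f_r * Real.sqrt (1 - y) + Real.sqrt (x * y)) /
        Real.sqrt ((1 - x) / (df - 1)))
      (Set.Ico (0:ℝ) 1) := by
  obtain ⟨hy0, hy1⟩ := hy
  intro a ha b hb hab
  obtain ⟨ha0, ha1⟩ := ha
  obtain ⟨hb0, hb1⟩ := hb
  have hdf' : (0:ℝ) < df - 1 := by linarith
  have hN1 : 0 < f_r * Real.sqrt (1 - y) + Real.sqrt (a * y) := by
    have : 0 < Real.sqrt (1 - y) := Real.sqrt_pos.mpr (by linarith)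
    have := Real.sqrt_nonneg (a * y)
    positivity
  have hNle : f_r * Real.sqrt (1 - y) + Real.sqrt (a * y) ≤
      f_r * Real.sqrt (1 - y) + Real.sqrt (b * y) := by
    have h : a * y ≤ b * y := by nlinarith
    exact add_le_add le_rfl (Real.sqrt_le_sqrt h)
  have hDb : 0 < Real.sqrt ((1 - b) / (df - 1)) :=
    Real.sqrt_pos.mpr (div_pos (by linarith) hdf')
  have hDlt : Real.sqrt ((1 - b) / (df - 1)) < Real.sqrt ((1 - a) / (df - 1)) := by
    apply Real.sqrt_lt_sqrt (le_of_lt (div_pos (by linarith) hdf'))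
    gcongr ?_ / _
    linarith
  calc (f_r * Real.sqrt (1 - y) + Real.sqrt (a * y)) / Real.sqrt ((1 - a) / (df - 1))
      < (f_r * Real.sqrt (1 - y) + Real.sqrt (a * y)) / Real.sqrt ((1 - b) / (df - 1)) :=
        div_lt_div_of_pos_left hN1 hDb hDlt
    _ ≤ (f_r * Real.sqrt (1 - y) + Real.sqrt (b * y)) / Real.sqrt ((1 - b) / (df - 1)) :=
        div_le_div_of_nonneg_right hNle hDb.le
end

section
/- Fix f_r > 0, df > 1, and bounds Ry, Rd ∈ (0,1). If f_r² < Ry·(1−Rd)/Rd, then the maximum of t(x,y) = (f_r·√(1−y) + √(x·y))/√((1−x)/(df−1)) over 0 ≤ x ≤ Ry, 0 ≤ y ≤ Rd is attained at (x,y) = (Ry, Rd). -/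
/-- If `f_r² < Ry·(1−Rd)/Rd`, the maximum of the adjusted t-statistic over the
box `[0,Ry] × [0,Rd]` is attained at the corner `(Ry, Rd)`. -/
theorem stmt2 (f_r df Ry Rd : ℝ) (hf : 0 < f_r) (hdf : 1 < df)
    (hRy : Ry ∈ Set.Ioo (0:ℝ) 1) (hRd : Rd ∈ Set.Ioo (0:ℝ) 1)
    (hcond : f_r ^ 2 < Ry * (1 - Rd) / Rd) :
    ∀ x y : ℝ, 0 ≤ x → x ≤ Ry → 0 ≤ y → y ≤ Rd →
      (f_r * Real.sqrt (1 - y) + Real.sqrt (x * y)) / Real.sqrt ((1 - x) / (df - 1)) ≤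
      (f_r * Real.sqrt (1 - Rd) + Real.sqrt (Ry * Rd)) / Real.sqrt ((1 - Ry) / (df - 1)) := by
  intro x y hx0 hxRy hy0 hyRd
  obtain ⟨hRy0, hRy1⟩ := hRy
  obtain ⟨hRd0, hRd1⟩ := hRd
  have hy1 : y < 1 := lt_of_le_of_lt hyRd hRd1
  have hdf1 : (0:ℝ) < df - 1 := by linarith
  -- numerator bounds
  set a := Real.sqrt (1 - y) with ha
  set b := Real.sqrt (1 - Rd) with hb
  set c := Real.sqrt Rd with hc
  set d := Real.sqrt y with hd
  set r := Real.sqrt Ry with hr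
  have ha2 : a ^ 2 = 1 - y := Real.sq_sqrt (by linarith)
  have hb2 : b ^ 2 = 1 - Rd := Real.sq_sqrt (by linarith)
  have hc2 : c ^ 2 = Rd := Real.sq_sqrt hRd0.le
  have hd2 : d ^ 2 = y := Real.sq_sqrt hy0
  have hr2 : r ^ 2 = Ry := Real.sq_sqrt hRy0.le
  have ha0 : 0 < a := Real.sqrt_pos.2 (by linarith)
  have hb0 : 0 ≤ b := Real.sqrt_nonneg _
  have hc0 : 0 < c := Real.sqrt_pos.2 hRd0
  have hd0 : 0 ≤ d := Real.sqrt_nonneg _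
  have hr0 : 0 ≤ r := Real.sqrt_nonneg _
  have hcond' : f_r ^ 2 * Rd < Ry * (1 - Rd) := by
    rw [div_eq_mul_inv] at hcond
    calc f_r ^ 2 * Rd < Ry * (1 - Rd) * Rd⁻¹ * Rd := by
          exact mul_lt_mul_of_pos_right hcond hRd0
      _ = Ry * (1 - Rd) := by field_simp
  -- f_r * c ≤ r * b
  have h1 : f_r * c ≤ r * b := by
    have : f_r * c = Real.sqrt (f_r ^ 2 * Rd) := by
      rw [Real.sqrt_mul (sq_nonneg _), Real.sqrt_sq hf.le]
    rw [this]
    have : r * b = Real.sqrt (Ry * (1 - Rd)) := by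
      rw [Real.sqrt_mul hRy0.le]
    rw [this]
    exact Real.sqrt_le_sqrt hcond'.le
  -- f_r * d ≤ r * a
  have hy2 : f_r ^ 2 * y ≤ Ry * (1 - y) := by
    nlinarith [mul_nonneg (mul_nonneg hRy0.le (by linarith : (0:ℝ) ≤ Rd - y)) (by norm_num : (0:ℝ) ≤ 1),
      mul_le_mul_of_nonneg_right hcond'.le hy0, hRd0,
      mul_nonneg hRy0.le (by linarith : (0:ℝ) ≤ Rd - y)]
  have h2 : f_r * d ≤ r * a := by
    have e1 : f_r * d = Real.sqrt (f_r ^ 2 * y) := by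
      rw [Real.sqrt_mul (sq_nonneg _), Real.sqrt_sq hf.le]
    have e2 : r * a = Real.sqrt (Ry * (1 - y)) := by
      rw [Real.sqrt_mul hRy0.le]
    rw [e1, e2]
    exact Real.sqrt_le_sqrt hy2
  have key : f_r * (c + d) ≤ r * (a + b) := by
    have h' := add_le_add h2 h1
    rw [mul_add, mul_add]
    linarith
  -- numerator monotone in y at x = Ry:  f_r*a + r*d ≤ f_r*b + r*c
  have hnum : f_r * (a - b) ≤ r * (c - d) := by
    have hprod : f_r * (c + d) * (Rd - y) ≤ r * (a + b) * (Rd - y) :=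
      mul_le_mul_of_nonneg_right key (by linarith)
    have habcd : (0:ℝ) < (a + b) * (c + d) := by positivity
    have hid1 : (a - b) * (a + b) = Rd - y := by
      rw [show (a - b) * (a + b) = a ^ 2 - b ^ 2 from by ring, ha2, hb2]; ring
    have hid2 : (c - d) * (c + d) = Rd - y := by
      rw [show (c - d) * (c + d) = c ^ 2 - d ^ 2 from by ring, hc2, hd2]
    rw [← mul_le_mul_iff_of_pos_right habcd]
    calc f_r * (a - b) * ((a + b) * (c + d))
        = f_r * (c + d) * ((a - b) * (a + b)) := by ring
      _ = f_r * (c + d) * (Rd - y) := by rw [hid1]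
      _ ≤ r * (a + b) * (Rd - y) := hprod
      _ = r * (a + b) * ((c - d) * (c + d)) := by rw [hid2]
      _ = r * (c - d) * ((a + b) * (c + d)) := by ring
  -- now the two calc steps
  have hnumRy : f_r * Real.sqrt (1 - y) + Real.sqrt (Ry * y) ≤
      f_r * Real.sqrt (1 - Rd) + Real.sqrt (Ry * Rd) := by
    have e1 : Real.sqrt (Ry * y) = r * d := Real.sqrt_mul hRy0.le _
    have e2 : Real.sqrt (Ry * Rd) = r * c := Real.sqrt_mul hRy0.le _
    rw [e1, e2, ← ha, ← hb]
    have h' := hnum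
    rw [mul_sub, mul_sub] at h'
    linarith
  have hnumx : Real.sqrt (x * y) ≤ Real.sqrt (Ry * y) :=
    Real.sqrt_le_sqrt (mul_le_mul_of_nonneg_right hxRy hy0)
  have hden : Real.sqrt ((1 - Ry) / (df - 1)) ≤ Real.sqrt ((1 - x) / (df - 1)) :=
    Real.sqrt_le_sqrt ((div_le_div_iff_of_pos_right hdf1).2 (by linarith))
  have hdenpos : 0 < Real.sqrt ((1 - Ry) / (df - 1)) :=
    Real.sqrt_pos.2 (div_pos (by linarith) hdf1)
  have hnumpos : 0 ≤ f_r * Real.sqrt (1 - Rd) + Real.sqrt (Ry * Rd) := by positivity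
  exact div_le_div₀ hnumpos (by linarith) hdenpos hden
end

section
/- Fix f_r > 0, df > 1, and bounds Ry, Rd ∈ (0,1). If f_r² ≥ Ry·(1−Rd)/Rd, then the maximum of t(x,y) = (f_r·√(1−y) + √(x·y))/√((1−x)/(df−1)) over 0 ≤ x ≤ Ry, 0 ≤ y ≤ Rd is attained at x = Ry and y = Ry/(f_r² + Ry), and this interior value of y satisfies Ry/(f_r² + Ry) ≤ Rd. -/
/-- If `f_r² ≥ Ry·(1−Rd)/Rd`, the maximum of the adjusted t-statistic over the box
`[0,Ry] × [0,Rd]` is attained at `x = Ry`, `y = Ry/(f_r²+Ry)`, and this interior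
value of `y` satisfies `Ry/(f_r²+Ry) ≤ Rd`. -/
theorem stmt3 (f_r df Ry Rd : ℝ) (hf : 0 < f_r) (hdf : 1 < df)
    (hRy : Ry ∈ Set.Ioo (0:ℝ) 1) (hRd : Rd ∈ Set.Ioo (0:ℝ) 1)
    (hcond : Ry * (1 - Rd) / Rd ≤ f_r ^ 2) :
    (∀ x y : ℝ, 0 ≤ x → x ≤ Ry → 0 ≤ y → y ≤ Rd →
      (f_r * Real.sqrt (1 - y) + Real.sqrt (x * y)) / Real.sqrt ((1 - x) / (df - 1)) ≤
      (f_r * Real.sqrt (1 - Ry / (f_r ^ 2 + Ry)) + Real.sqrt (Ry * (Ry / (f_r ^ 2 + Ry)))) /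
        Real.sqrt ((1 - Ry) / (df - 1))) ∧
    Ry / (f_r ^ 2 + Ry) ≤ Rd := by
  obtain ⟨hRy0, hRy1⟩ := hRy
  obtain ⟨hRd0, hRd1⟩ := hRd
  have hS0 : 0 < f_r ^ 2 + Ry := by positivity
  have hpart2 : Ry / (f_r ^ 2 + Ry) ≤ Rd := by
    rw [div_le_iff₀ hS0]
    have h := (div_le_iff₀ hRd0).mp hcond
    nlinarith
  refine ⟨?_, hpart2⟩
  -- the RHS numerator equals √(f_r^2 + Ry)
  have hy1 : 1 - Ry / (f_r ^ 2 + Ry) = f_r ^ 2 / (f_r ^ 2 + Ry) := by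
    field_simp
    ring
  have hsS : Real.sqrt (f_r ^ 2 + Ry) ≠ 0 := by positivity
  have hnum : f_r * Real.sqrt (1 - Ry / (f_r ^ 2 + Ry))
      + Real.sqrt (Ry * (Ry / (f_r ^ 2 + Ry))) = Real.sqrt (f_r ^ 2 + Ry) := by
    rw [hy1]
    have h1 : Real.sqrt (f_r ^ 2 / (f_r ^ 2 + Ry)) = f_r / Real.sqrt (f_r ^ 2 + Ry) := by
      rw [Real.sqrt_div (by positivity), Real.sqrt_sq hf.le]
    have h2 : Real.sqrt (Ry * (Ry / (f_r ^ 2 + Ry))) = Ry / Real.sqrt (f_r ^ 2 + Ry) := by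
      rw [show Ry * (Ry / (f_r ^ 2 + Ry)) = Ry ^ 2 / (f_r ^ 2 + Ry) by ring,
        Real.sqrt_div (by positivity), Real.sqrt_sq hRy0.le]
    rw [h1, h2]
    have hms := Real.mul_self_sqrt hS0.le
    field_simp
    nlinarith [hms]
  rw [hnum]
  intro x y hx0 hxR hy0 hyRd
  have hy1' : y ≤ 1 := hyRd.trans hRd1.le
  have hdenpos : 0 < Real.sqrt ((1 - Ry) / (df - 1)) :=
    Real.sqrt_pos.mpr (div_pos (by linarith) (by linarith))
  have hden : Real.sqrt ((1 - Ry) / (df - 1)) ≤ Real.sqrt ((1 - x) / (df - 1)) := by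
    apply Real.sqrt_le_sqrt
    gcongr
  have hnum_le : f_r * Real.sqrt (1 - y) + Real.sqrt (x * y) ≤ Real.sqrt (f_r ^ 2 + Ry) := by
    have h1 : Real.sqrt (x * y) ≤ Real.sqrt (Ry * y) :=
      Real.sqrt_le_sqrt (by nlinarith)
    have hb : Real.sqrt (Ry * y) = Real.sqrt Ry * Real.sqrt y := Real.sqrt_mul hRy0.le y
    have key : f_r * Real.sqrt (1 - y) + Real.sqrt Ry * Real.sqrt y
        ≤ Real.sqrt (f_r ^ 2 + Ry) := by
      have a2 := Real.sq_sqrt (show (0:ℝ) ≤ 1 - y by linarith)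
      have b2 := Real.sq_sqrt hy0
      have c2 := Real.sq_sqrt hRy0.le
      have s2 := Real.sq_sqrt hS0.le
      have na : 0 ≤ Real.sqrt (1 - y) := Real.sqrt_nonneg _
      have nb : 0 ≤ Real.sqrt y := Real.sqrt_nonneg _
      have nc : 0 ≤ Real.sqrt Ry := Real.sqrt_nonneg _
      have ns : 0 ≤ Real.sqrt (f_r ^ 2 + Ry) := Real.sqrt_nonneg _
      nlinarith [sq_nonneg (f_r * Real.sqrt y - Real.sqrt Ry * Real.sqrt (1 - y)),
        sq_nonneg (f_r * Real.sqrt (1 - y) + Real.sqrt Ry * Real.sqrt y - Real.sqrt (f_r ^ 2 + Ry))]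
    calc f_r * Real.sqrt (1 - y) + Real.sqrt (x * y)
        ≤ f_r * Real.sqrt (1 - y) + Real.sqrt (Ry * y) := by linarith
      _ = f_r * Real.sqrt (1 - y) + Real.sqrt Ry * Real.sqrt y := by rw [hb]
      _ ≤ Real.sqrt (f_r ^ 2 + Ry) := key
  exact div_le_div₀ (Real.sqrt_nonneg _) hnum_le hdenpos hden
end

section
/- Let f_r > 0 and f* ≥ f_r, and set RVI = (√(fΔ⁴+4fΔ²) − fΔ²)/2 with fΔ = f* − f_r. If f* ≥ 1/f_r, then f_r² ≥ 1 − RVI. -/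
/-- If `f* ≥ 1/f_r`, then `f_r² ≥ 1 − RVI` where
`RVI = (√(fΔ⁴+4fΔ²) − fΔ²)/2`, `fΔ = f* − f_r`. -/
theorem stmt11 (f_r fstar : ℝ) (hf : 0 < f_r) (hle : f_r ≤ fstar)
    (hcond : 1 / f_r ≤ fstar) :
    1 - (Real.sqrt ((fstar - f_r) ^ 4 + 4 * (fstar - f_r) ^ 2) - (fstar - f_r) ^ 2) / 2 ≤
      f_r ^ 2 := by
  set d := fstar - f_r with hdd
  have hd : 0 ≤ d := by linarith
  have h1 : 1 - f_r ^ 2 ≤ d * f_r := by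
    have := (div_le_iff₀ hf).mp hcond
    nlinarith
  have hnn : (0:ℝ) ≤ d ^ 4 + 4 * d ^ 2 := by positivity
  have hs := Real.sq_sqrt hnn
  have hsn := Real.sqrt_nonneg (d ^ 4 + 4 * d ^ 2)
  set s := Real.sqrt (d ^ 4 + 4 * d ^ 2) with hss
  -- suffices: s ≥ 2 - 2*f_r^2 - d^2
  rcases le_or_gt (2 - 2 * f_r ^ 2 + d ^ 2) 0 with h | h
  · nlinarith
  · have hkey : d ^ 2 * f_r ^ 2 ≥ (1 - f_r ^ 2) ^ 2 := by
      rcases le_or_gt (1 - f_r ^ 2) 0 with h2 | h2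
      · nlinarith
      · nlinarith [mul_le_mul h1 h1 (le_of_lt h2) (mul_nonneg hd hf.le)]
    by_contra hcon
    push_neg at hcon
    have hlt : s < 2 - 2 * f_r ^ 2 + d ^ 2 := by nlinarith
    have := mul_self_lt_mul_self hsn hlt
    nlinarith
end
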